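/- Let X be a topological space and Y ⊆ X a B₁*-embedded subset of X. Then Y is B₁-embedded in X if and only if for every Baire one function f : X → ℝ whose zero set Z(f) is disjoint from Y, the sets Y and Z(f) are completely separated in X by B₁(X). In particular, a zero set Z(h) of a Baire one function h : X → ℝ is B₁*-embedded in X if and only if it is B₁-embedded in X. -/

import Mathlib

/-- A function between topological spaces is *Baire one* if it is the pointwise
limit of a sequence of continuous functions. -/
def IsBaireOne {X Y : Type*} [TopologicalSpace X] [TopologicalSpace Y] (f : X → Y) : Prop :=
  ∃ F : ℕ → X → Y, (∀ n, Continuous (F n)) ∧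
    ∀ x, Filter.Tendsto (fun n => F n x) Filter.atTop (nhds (f x))

/-- Two subsets `A`, `B` of `S` are *completely separated by `B₁(S)`* if there is a
Baire one function `h : S → ℝ` with `0 ≤ h ≤ 1`, `h = 0` on `A` and `h = 1` on `B`. -/
def CompletelySeparatedB1 {S : Type*} [TopologicalSpace S] (A B : Set S) : Prop :=
  ∃ h : S → ℝ, IsBaireOne h ∧ (∀ x, 0 ≤ h x ∧ h x ≤ 1) ∧
    (∀ x ∈ A, h x = 0) ∧ (∀ x ∈ B, h x = 1)

/-- `Y` is *B₁-embedded* in `X` if every Baire one function on the subspace `Y`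
extends to a Baire one function on `X`. -/
def B1Embedded {X : Type*} [TopologicalSpace X] (Y : Set X) : Prop :=
  ∀ f : Y → ℝ, IsBaireOne f → ∃ g : X → ℝ, IsBaireOne g ∧ ∀ y : Y, g y = f y

/-- `Y` is *B₁*-embedded* in `X` if every bounded Baire one function on the subspace `Y`
extends to a bounded Baire one function on `X`. -/
def B1StarEmbedded {X : Type*} [TopologicalSpace X] (Y : Set X) : Prop :=
  ∀ f : Y → ℝ, IsBaireOne f → (∃ M : ℝ, ∀ y : Y, |f y| ≤ M) →
    ∃ g : X → ℝ, IsBaireOne g ∧ (∃ M : ℝ, ∀ x : X, |g x| ≤ M) ∧ ∀ y : Y, g y = f y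

/-!
If `Y` is B₁-embedded and `Z(f)` misses `Y`, extend `1 / f` from `Y` to a Baire one `G` on `X`;
then `1 - f G` is `0` on `Y` and `1` on `Z(f)`. Conversely, compress a Baire one `f` on `Y` into
`(-1, 1)` by `t ↦ t / (1 + |t|)` and extend it boundedly to `g`. The set `{|g| ≥ 1}` is a zero set
missing `Y`, so a Baire one `k` separating the two turns `g (1 - k)` into an extension with values
in `(-1, 1)`, and `s ↦ s / (1 - |s|)` undoes the compression. Finally, two disjoint zero sets
`Z(h)` and `Z(f)` are separated by `h² / (h² + f²)`, so B₁*-embedded zero sets are B₁-embedded.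
-/

section BaireOne

variable {X Y Z : Type*} [TopologicalSpace X] [TopologicalSpace Y] [TopologicalSpace Z]

theorem Continuous.comp_isBaireOne {g : Y → Z} (hg : Continuous g) {f : X → Y}
    (hf : IsBaireOne f) : IsBaireOne fun x => g (f x) := by
  obtain ⟨F, hFc, hFf⟩ := hf
  exact ⟨fun n x => g (F n x), fun n => hg.comp (hFc n),
    fun x => (hg.tendsto (f x)).comp (hFf x)⟩

theorem IsBaireOne.comp_continuous {f : Y → Z} (hf : IsBaireOne f) {g : X → Y}
    (hg : Continuous g) : IsBaireOne fun x => f (g x) := by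
  obtain ⟨F, hFc, hFf⟩ := hf
  exact ⟨fun n x => F n (g x), fun n => (hFc n).comp hg, fun x => hFf (g x)⟩

theorem IsBaireOne.prodMk {f : X → Y} {g : X → Z} (hf : IsBaireOne f) (hg : IsBaireOne g) :
    IsBaireOne fun x => (f x, g x) := by
  obtain ⟨F, hFc, hFf⟩ := hf
  obtain ⟨G, hGc, hGg⟩ := hg
  exact ⟨fun n x => (F n x, G n x), fun n => (hFc n).prodMk (hGc n),
    fun x => (hFf x).prodMk_nhds (hGg x)⟩

theorem IsBaireOne.mul {M : Type*} [TopologicalSpace M] [Mul M] [ContinuousMul M]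
    {f g : X → M} (hf : IsBaireOne f) (hg : IsBaireOne g) : IsBaireOne fun x => f x * g x :=
  continuous_mul.comp_isBaireOne (hf.prodMk hg)

/-- The approximants `F n / (F n ^ 2 + 1 / (n + 1))` are defined everywhere, even where
`F n` vanishes, and still converge to `1 / u`. -/
theorem IsBaireOne.inv₀ {u : X → ℝ} (hu : IsBaireOne u) (hu0 : ∀ x, u x ≠ 0) :
    IsBaireOne fun x => (u x)⁻¹ := by
  obtain ⟨F, hFc, hFu⟩ := hu
  have hden : ∀ (n : ℕ) (t : ℝ), t ^ 2 + 1 / ((n : ℝ) + 1) ≠ 0 := fun n t => by positivity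
  refine ⟨fun n x => F n x / (F n x ^ 2 + 1 / ((n : ℝ) + 1)),
    fun n => (hFc n).div (((hFc n).pow 2).add continuous_const) fun x => hden n _, fun x => ?_⟩
  have hlim := (hFu x).div (((hFu x).pow 2).add tendsto_one_div_add_atTop_nhds_zero_nat)
    (by simpa using hu0 x)
  rwa [add_zero, sq, div_mul_cancel_left₀ (hu0 x)] at hlim

theorem IsBaireOne.div {f u : X → ℝ} (hf : IsBaireOne f) (hu : IsBaireOne u)
    (hu0 : ∀ x, u x ≠ 0) : IsBaireOne fun x => f x / u x := by
  simpa only [div_eq_mul_inv] using hf.mul (hu.inv₀ hu0)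

end BaireOne

theorem abs_div_one_add_abs_lt_one (t : ℝ) : |t / (1 + |t|)| < 1 := by
  have hpos : 0 < 1 + |t| := by positivity
  rw [abs_div, abs_of_pos hpos, div_lt_one hpos]
  linarith

theorem div_one_add_abs_div_one_sub_abs (t : ℝ) :
    t / (1 + |t|) / (1 - |t / (1 + |t|)|) = t := by
  have hpos : 0 < 1 + |t| := by positivity
  rw [abs_div, abs_of_pos hpos]
  field_simp
  ring

section Embedding

variable {X : Type*} [TopologicalSpace X]

theorem completelySeparatedB1_of_isBaireOne {A B : Set X} {u : X → ℝ} (hu : IsBaireOne u)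
    (hA : ∀ x ∈ A, u x = 0) (hB : ∀ x ∈ B, u x = 1) : CompletelySeparatedB1 A B := by
  have hclamp : Continuous fun t : ℝ => (Set.projIcc 0 1 zero_le_one t : ℝ) :=
    continuous_subtype_val.comp continuous_projIcc
  refine ⟨fun x => Set.projIcc 0 1 zero_le_one (u x), hclamp.comp_isBaireOne hu,
    fun x => (Set.projIcc 0 1 zero_le_one (u x)).2, fun x hx => ?_, fun x hx => ?_⟩
  · simp [hA x hx]
  · simp [hB x hx]

theorem completelySeparatedB1_zeroSet {f h : X → ℝ} (hh : IsBaireOne h) (hf : IsBaireOne f)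
    (hfh : {x | f x = 0} ∩ {x | h x = 0} = ∅) :
    CompletelySeparatedB1 {x | h x = 0} {x | f x = 0} := by
  have hne : ∀ x, h x = 0 → f x ≠ 0 := fun x hx hfx =>
    (Set.eq_empty_iff_forall_notMem.1 hfh) x ⟨hfx, hx⟩
  have hpos : ∀ x, 0 < h x ^ 2 + f x ^ 2 := by
    intro x
    by_cases hx : h x = 0
    · have := hne x hx
      positivity
    · positivity
  have hsum : IsBaireOne fun x => h x ^ 2 + f x ^ 2 :=
    (by fun_prop : Continuous fun p : ℝ × ℝ => p.1 ^ 2 + p.2 ^ 2).comp_isBaireOne (hh.prodMk hf)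
  refine completelySeparatedB1_of_isBaireOne
    (((continuous_pow 2).comp_isBaireOne hh).div hsum fun x => (hpos x).ne') ?_ ?_
  · intro x hx
    simp [hx.out]
  · intro x hx
    have hx' : h x ≠ 0 := fun hh0 => hne x hh0 hx.out
    simp [hx.out, hx']

theorem B1Embedded.completelySeparatedB1 {Y : Set X} (hY : B1Embedded Y) {f : X → ℝ}
    (hf : IsBaireOne f) (hfY : {x | f x = 0} ∩ Y = ∅) :
    CompletelySeparatedB1 Y {x | f x = 0} := by
  have hne : ∀ y : Y, f y ≠ 0 := fun y hy =>
    (Set.eq_empty_iff_forall_notMem.1 hfY) y ⟨hy, y.2⟩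
  obtain ⟨G, hG, hGf⟩ := hY _ ((hf.comp_continuous continuous_subtype_val).inv₀ hne)
  refine completelySeparatedB1_of_isBaireOne
    ((by fun_prop : Continuous fun t : ℝ => 1 - t).comp_isBaireOne (hf.mul hG)) (fun x hx => ?_)
    (fun x hx => ?_)
  · simp [hGf ⟨x, hx⟩, hne ⟨x, hx⟩]
  · simp [hx.out]

theorem B1Embedded.b1StarEmbedded {Y : Set X} (hY : B1Embedded Y) : B1StarEmbedded Y := by
  rintro f hf ⟨M, hM⟩
  obtain ⟨g, hg, hgf⟩ := hY f hf
  have hclamp : Continuous fun t : ℝ => max (-|M|) (min t |M|) := by fun_prop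
  refine ⟨fun x => max (-|M|) (min (g x) |M|), hclamp.comp_isBaireOne hg,
    ⟨|M|, fun x => abs_le.2 ⟨le_max_left _ _, max_le ?_ (min_le_right _ _)⟩⟩, fun y => ?_⟩
  · linarith [abs_nonneg M]
  · have hfy := abs_le.1 ((hM y).trans (le_abs_self M))
    simp only [hgf y, min_eq_left hfy.2, max_eq_right hfy.1]

theorem B1StarEmbedded.exists_extension_abs_lt_one {Y : Set X} (hY : B1StarEmbedded Y)
    (hsep : ∀ f : X → ℝ, IsBaireOne f → {x | f x = 0} ∩ Y = ∅ →
      CompletelySeparatedB1 Y {x | f x = 0})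
    {f : Y → ℝ} (hf : IsBaireOne f) (hf1 : ∀ y, |f y| < 1) :
    ∃ g : X → ℝ, IsBaireOne g ∧ (∀ x, |g x| < 1) ∧ ∀ y : Y, g y = f y := by
  obtain ⟨g, hg, -, hgf⟩ := hY f hf ⟨1, fun y => (hf1 y).le⟩
  have hF : IsBaireOne fun x => max (1 - |g x|) 0 :=
    (by fun_prop : Continuous fun t : ℝ => max (1 - |t|) 0).comp_isBaireOne hg
  have hZF : ∀ x, max (1 - |g x|) 0 = 0 ↔ 1 ≤ |g x| := fun x => by
    rw [max_eq_right_iff, sub_nonpos]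
  have hZFY : {x | max (1 - |g x|) 0 = 0} ∩ Y = ∅ := by
    refine Set.eq_empty_iff_forall_notMem.2 fun x ⟨hx, hxY⟩ => ?_
    have h1 := (hZF x).1 hx
    rw [hgf ⟨x, hxY⟩] at h1
    exact (hf1 _).not_ge h1
  obtain ⟨k, hk, hk01, hkY, hkZ⟩ := hsep _ hF hZFY
  refine ⟨fun x => g x * (1 - k x),
    hg.mul ((by fun_prop : Continuous fun t : ℝ => 1 - t).comp_isBaireOne hk),
    fun x => ?_, fun y => ?_⟩
  · by_cases hx : 1 ≤ |g x|
    · simp [hkZ x ((hZF x).2 hx)]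
    · have hk1 : |1 - k x| ≤ 1 := abs_le.2 ⟨by linarith [hk01 x], by linarith [hk01 x]⟩
      calc |g x * (1 - k x)| = |g x| * |1 - k x| := abs_mul _ _
        _ ≤ |g x| := mul_le_of_le_one_right (abs_nonneg _) hk1
        _ < 1 := not_le.1 hx
  · simp [hkY y y.2, hgf y]

theorem B1StarEmbedded.b1Embedded {Y : Set X} (hY : B1StarEmbedded Y)
    (hsep : ∀ f : X → ℝ, IsBaireOne f → {x | f x = 0} ∩ Y = ∅ →
      CompletelySeparatedB1 Y {x | f x = 0}) : B1Embedded Y := by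
  intro f hf
  have hcompress : Continuous fun t : ℝ => t / (1 + |t|) :=
    continuous_id.div (by fun_prop) fun t => by positivity
  obtain ⟨g, hg, hg1, hgf⟩ := hY.exists_extension_abs_lt_one hsep
    (hcompress.comp_isBaireOne hf) fun y => abs_div_one_add_abs_lt_one (f y)
  refine ⟨fun x => g x / (1 - |g x|),
    hg.div ((by fun_prop : Continuous fun t : ℝ => 1 - |t|).comp_isBaireOne hg)
      fun x => (sub_pos.2 (hg1 x)).ne', fun y => ?_⟩
  simp only [hgf y]
  exact div_one_add_abs_div_one_sub_abs (f y)

end Embedding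

theorem b1StarEmbedded_b1Embedded_iff {X : Type*} [TopologicalSpace X]
    (Y : Set X) (hY : B1StarEmbedded Y) :
    (B1Embedded Y ↔
      ∀ f : X → ℝ, IsBaireOne f → {x : X | f x = 0} ∩ Y = ∅ →
        CompletelySeparatedB1 Y {x : X | f x = 0}) ∧
    (∀ h : X → ℝ, IsBaireOne h →
      (B1StarEmbedded {x : X | h x = 0} ↔ B1Embedded {x : X | h x = 0})) := by
  refine ⟨⟨fun hB _ hf hfY => hB.completelySeparatedB1 hf hfY, hY.b1Embedded⟩, fun h hh => ?_⟩
  exact ⟨fun hZ => hZ.b1Embedded fun _ hf hfh => completelySeparatedB1_zeroSet hh hf hfh,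
    B1Embedded.b1StarEmbedded⟩
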